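/- Let A ∈ 𝒜 satisfy condition (♦), and fix an s-number sequence s and Banach spaces E, F. Then H_Φ^A(E,F) is a closed linear subspace of (L_Φ^A(E,F), ‖·‖_Φ^A). -/

import Mathlib

open Filter Topology

/-- An Orlicz function: convex, nondecreasing, continuous on `[0,∞)`,
vanishing at `0`, positive on `(0,∞)`, tending to `∞` at `∞`. -/
structure IsOrliczFn (φ : ℝ → ℝ) : Prop where
  convexOn : ConvexOn ℝ (Set.Ici (0 : ℝ)) φ
  monotoneOn : MonotoneOn φ (Set.Ici (0 : ℝ))
  continuousOn : ContinuousOn φ (Set.Ici (0 : ℝ))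
  map_zero : φ 0 = 0
  pos : ∀ t : ℝ, 0 < t → 0 < φ t
  tendsto_atTop : Filter.Tendsto φ Filter.atTop Filter.atTop

/-- A Musielak-Orlicz function: a sequence of Orlicz functions. -/
def IsMusielakOrlicz (Φ : ℕ → ℝ → ℝ) : Prop := ∀ n, IsOrliczFn (Φ n)

/-- The class 𝒜 of infinite matrices: every column is nonzero. -/
def MatrixClassA (a : ℕ → ℕ → ℝ) : Prop := ∀ k, ∃ n, a n k ≠ 0

/-- Condition (♦) on the matrix `A` with constant `M` (`0`-indexed version of
`|a_{n,2k-1}| + |a_{n,2k}| ≤ M |a_{n,k}|`). -/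
def CondDiamond (a : ℕ → ℕ → ℝ) (M : ℝ) : Prop :=
  ∀ n k : ℕ, |a n (2 * k)| + |a n (2 * k + 1)| ≤ M * |a n k|

/-- An `s`-number sequence in the sense of Pietsch (indexed from `0`, so that
`s T 0` is the paper's `s₁(T)`). -/
structure SNumberSeq : Type 1 where
  s : ∀ (E F : Type) [NormedAddCommGroup E] [NormedSpace ℝ E] [CompleteSpace E]
      [NormedAddCommGroup F] [NormedSpace ℝ F] [CompleteSpace F],
      (E →L[ℝ] F) → ℕ → ℝ
  nonneg : ∀ (E F : Type) [NormedAddCommGroup E] [NormedSpace ℝ E] [CompleteSpace E]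
      [NormedAddCommGroup F] [NormedSpace ℝ F] [CompleteSpace F]
      (T : E →L[ℝ] F) (n : ℕ), 0 ≤ s E F T n
  norm_eq : ∀ (E F : Type) [NormedAddCommGroup E] [NormedSpace ℝ E] [CompleteSpace E]
      [NormedAddCommGroup F] [NormedSpace ℝ F] [CompleteSpace F]
      (T : E →L[ℝ] F), s E F T 0 = ‖T‖
  antitone : ∀ (E F : Type) [NormedAddCommGroup E] [NormedSpace ℝ E] [CompleteSpace E]
      [NormedAddCommGroup F] [NormedSpace ℝ F] [CompleteSpace F]
      (T : E →L[ℝ] F), Antitone (s E F T)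
  additive : ∀ (E F : Type) [NormedAddCommGroup E] [NormedSpace ℝ E] [CompleteSpace E]
      [NormedAddCommGroup F] [NormedSpace ℝ F] [CompleteSpace F]
      (S T : E →L[ℝ] F) (m n : ℕ), s E F (S + T) (m + n) ≤ s E F S m + s E F T n
  ideal : ∀ (E F E₀ F₀ : Type)
      [NormedAddCommGroup E] [NormedSpace ℝ E] [CompleteSpace E]
      [NormedAddCommGroup F] [NormedSpace ℝ F] [CompleteSpace F]
      [NormedAddCommGroup E₀] [NormedSpace ℝ E₀] [CompleteSpace E₀]
      [NormedAddCommGroup F₀] [NormedSpace ℝ F₀] [CompleteSpace F₀]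
      (R : F →L[ℝ] F₀) (S : E →L[ℝ] F) (T : E₀ →L[ℝ] E) (n : ℕ),
      s E₀ F₀ ((R.comp S).comp T) n ≤ ‖R‖ * s E F S n * ‖T‖
  rank : ∀ (E F : Type) [NormedAddCommGroup E] [NormedSpace ℝ E] [CompleteSpace E]
      [NormedAddCommGroup F] [NormedSpace ℝ F] [CompleteSpace F]
      (T : E →L[ℝ] F) (n : ℕ),
      Module.rank ℝ ↥(LinearMap.range (T : E →ₗ[ℝ] F)) ≤ (n : Cardinal) → s E F T n = 0
  norming : ∀ n : ℕ,
      s (EuclideanSpace ℝ (Fin (n + 1))) (EuclideanSpace ℝ (Fin (n + 1)))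
        (ContinuousLinearMap.id ℝ (EuclideanSpace ℝ (Fin (n + 1)))) n = 1

/-- Membership of a scalar sequence `t = (s_k(T))` in `l_Φ^A`:
row sums `∑_k |a_{nk}| t_k` are finite and `∑_n φ_n(row_n/σ) < ∞` for some `σ > 0`. -/
def OpMemL (Φ : ℕ → ℝ → ℝ) (a : ℕ → ℕ → ℝ) (t : ℕ → ℝ) : Prop :=
  (∀ n, Summable fun k => |a n k| * t k) ∧
    ∃ σ > (0 : ℝ), Summable fun n => Φ n ((∑' k, |a n k| * t k) / σ)

/-- Membership in `h_Φ^A`: as `OpMemL` but for every `σ > 0`. -/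
def OpMemH (Φ : ℕ → ℝ → ℝ) (a : ℕ → ℕ → ℝ) (t : ℕ → ℝ) : Prop :=
  (∀ n, Summable fun k => |a n k| * t k) ∧
    ∀ σ > (0 : ℝ), Summable fun n => Φ n ((∑' k, |a n k| * t k) / σ)

/-- The quasi-norm `‖T‖_Φ^A` evaluated on the sequence `t = (s_k(T))`. -/
noncomputable def OpANorm (Φ : ℕ → ℝ → ℝ) (a : ℕ → ℕ → ℝ) (t : ℕ → ℝ) : ℝ :=
  sInf {σ : ℝ | 0 < σ ∧ (Summable fun n => Φ n ((∑' k, |a n k| * t k) / σ)) ∧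
    (∑' n, Φ n ((∑' k, |a n k| * t k) / σ)) ≤ 1}

/-!
The s-numbers are subadditive in the form `s_{2k}(S + T) ≤ s_k(S) + s_k(T)` and decreasing,
so condition (♦), applied to the pair of columns `2k, 2k+1`, gives the row estimate
`∑_k |a_{nk}| s_k(S + T) ≤ M (∑_k |a_{nk}| s_k(S) + ∑_k |a_{nk}| s_k(T))`.
Midpoint convexity of each `φ_n` then bounds the modular of `S + T` at `σ` by the mean of the
modulars of `S` and `T` at `σ / 2M`. For closedness write `T = S + (T - S)` with `S ∈ H` and
`‖T - S‖_Φ^A < σ / 2M`: the modular of `T` at `σ` is controlled by that of `S` and that of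
`T - S`, both at `σ / 2M`, and both are finite.
-/

theorem IsOrliczFn.mono {φ : ℝ → ℝ} (hφ : IsOrliczFn φ) {x y : ℝ} (hx : 0 ≤ x) (hxy : x ≤ y) :
    φ x ≤ φ y :=
  hφ.monotoneOn hx (hx.trans hxy) hxy

theorem IsOrliczFn.nonneg {φ : ℝ → ℝ} (hφ : IsOrliczFn φ) {x : ℝ} (hx : 0 ≤ x) : 0 ≤ φ x :=
  hφ.map_zero ▸ hφ.mono le_rfl hx

theorem IsOrliczFn.map_midpoint_le {φ : ℝ → ℝ} (hφ : IsOrliczFn φ) {u v : ℝ} (hu : 0 ≤ u)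
    (hv : 0 ≤ v) : φ ((u + v) / 2) ≤ (φ u + φ v) / 2 := by
  have h := hφ.convexOn.2 (Set.mem_Ici.2 hu) (Set.mem_Ici.2 hv) (by norm_num : (0 : ℝ) ≤ 1 / 2)
    (by norm_num : (0 : ℝ) ≤ 1 / 2) (by norm_num)
  rw [smul_eq_mul, smul_eq_mul, smul_eq_mul, smul_eq_mul, ← mul_add, ← mul_add] at h
  rwa [div_eq_inv_mul, div_eq_inv_mul, ← one_div]

theorem IsOrliczFn.map_mul_le {φ : ℝ → ℝ} (hφ : IsOrliczFn φ) {c x : ℝ} (hc₀ : 0 ≤ c)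
    (hc₁ : c ≤ 1) (hx : 0 ≤ x) : φ (c * x) ≤ c * φ x := by
  have h := hφ.convexOn.2 (Set.mem_Ici.2 hx) (Set.mem_Ici.2 le_rfl) hc₀ (sub_nonneg.2 hc₁)
    (add_sub_cancel c 1)
  simpa [hφ.map_zero] using h

namespace IsMusielakOrlicz

variable {Φ : ℕ → ℝ → ℝ} {r p q : ℕ → ℝ}

theorem summable_of_le (hΦ : IsMusielakOrlicz Φ) (hr : ∀ n, 0 ≤ r n) (hle : ∀ n, r n ≤ p n)
    (hp : Summable fun n => Φ n (p n)) : Summable fun n => Φ n (r n) :=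
  hp.of_nonneg_of_le (fun n => (hΦ n).nonneg (hr n)) fun n => (hΦ n).mono (hr n) (hle n)

theorem summable_of_le_midpoint (hΦ : IsMusielakOrlicz Φ) (hr : ∀ n, 0 ≤ r n)
    (hp₀ : ∀ n, 0 ≤ p n) (hq₀ : ∀ n, 0 ≤ q n) (hle : ∀ n, r n ≤ (p n + q n) / 2)
    (hp : Summable fun n => Φ n (p n)) (hq : Summable fun n => Φ n (q n)) :
    Summable fun n => Φ n (r n) :=
  hΦ.summable_of_le (p := fun n => (p n + q n) / 2) hr hle <|
    ((hp.add hq).div_const 2).of_nonneg_of_le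
      (fun n => (hΦ n).nonneg (by linarith [hp₀ n, hq₀ n]))
      fun n => (hΦ n).map_midpoint_le (hp₀ n) (hq₀ n)

theorem summable_div_of_le_mul (hΦ : IsMusielakOrlicz Φ) (hr : ∀ n, 0 ≤ r n)
    (hp₀ : ∀ n, 0 ≤ p n) {c τ σ : ℝ} (hle : ∀ n, r n ≤ c * p n) (hτ : 0 < τ) (hσ : 0 < σ)
    (hcτ : c * τ ≤ σ) (hp : Summable fun n => Φ n (p n / τ)) :
    Summable fun n => Φ n (r n / σ) := by
  refine hΦ.summable_of_le (fun n => div_nonneg (hr n) hσ.le) (fun n => ?_) hp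
  rw [div_le_div_iff₀ hσ hτ]
  calc r n * τ ≤ c * p n * τ := mul_le_mul_of_nonneg_right (hle n) hτ.le
    _ = p n * (c * τ) := by ring
    _ ≤ p n * σ := mul_le_mul_of_nonneg_left hcτ (hp₀ n)

theorem summable_div_of_le_mul_add (hΦ : IsMusielakOrlicz Φ) (hr : ∀ n, 0 ≤ r n)
    (hp₀ : ∀ n, 0 ≤ p n) (hq₀ : ∀ n, 0 ≤ q n) {M τ σ : ℝ} (hM : 0 < M)
    (hle : ∀ n, r n ≤ M * (p n + q n)) (hτ : 0 < τ) (hσ : 2 * M * τ ≤ σ)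
    (hp : Summable fun n => Φ n (p n / τ)) (hq : Summable fun n => Φ n (q n / τ)) :
    Summable fun n => Φ n (r n / σ) := by
  have hMτ : 0 < 2 * M * τ := by positivity
  refine hΦ.summable_of_le_midpoint (fun n => div_nonneg (hr n) (hMτ.le.trans hσ))
    (fun n => div_nonneg (hp₀ n) hτ.le) (fun n => div_nonneg (hq₀ n) hτ.le) (fun n => ?_) hp hq
  calc r n / σ ≤ r n / (2 * M * τ) := div_le_div_of_nonneg_left (hr n) hMτ hσ
    _ ≤ M * (p n + q n) / (2 * M * τ) := by gcongr; exact hle n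
    _ = (p n / τ + q n / τ) / 2 := by field_simp

/-- Convexity gives `φ (x / λ) ≤ φ x / λ` for `λ ≥ 1`, so dividing by the modular itself
brings it below `1`. -/
theorem exists_summable_tsum_le_one (hΦ : IsMusielakOrlicz Φ) (hr : ∀ n, 0 ≤ r n) {σ : ℝ}
    (hσ : 0 < σ) (hs : Summable fun n => Φ n (r n / σ)) :
    ∃ ρ > 0, (Summable fun n => Φ n (r n / ρ)) ∧ ∑' n, Φ n (r n / ρ) ≤ 1 := by
  set m := max 1 (∑' n, Φ n (r n / σ))
  have hm : 1 ≤ m := le_max_left _ _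
  have hm₀ : 0 < m := one_pos.trans_le hm
  have hle : ∀ n, Φ n (r n / (m * σ)) ≤ m⁻¹ * Φ n (r n / σ) := fun n => by
    rw [mul_comm m σ, ← div_div, div_eq_inv_mul (r n / σ) m]
    exact (hΦ n).map_mul_le (inv_nonneg.2 hm₀.le) (inv_le_one_of_one_le₀ hm)
      (div_nonneg (hr n) hσ.le)
  have hs' : Summable fun n => Φ n (r n / (m * σ)) :=
    (hs.mul_left m⁻¹).of_nonneg_of_le
      (fun n => (hΦ n).nonneg (div_nonneg (hr n) (by positivity))) hle
  refine ⟨m * σ, by positivity, hs', ?_⟩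
  calc ∑' n, Φ n (r n / (m * σ)) ≤ ∑' n, m⁻¹ * Φ n (r n / σ) :=
        hs'.tsum_le_tsum hle (hs.mul_left _)
    _ = m⁻¹ * ∑' n, Φ n (r n / σ) := tsum_mul_left
    _ ≤ m⁻¹ * m := mul_le_mul_of_nonneg_left (le_max_right _ _) (inv_nonneg.2 hm₀.le)
    _ = 1 := inv_mul_cancel₀ hm₀.ne'

end IsMusielakOrlicz

/-- `OpANorm` is the infimum of a set that may be empty (then it is `0`), so the approximation
hypothesis says something only once that set is known to be nonempty. -/
theorem exists_summable_of_opANorm_lt {Φ : ℕ → ℝ → ℝ} (hΦ : IsMusielakOrlicz Φ)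
    {a : ℕ → ℕ → ℝ} {t : ℕ → ℝ} (ht : ∀ k, 0 ≤ t k)
    (hL : ∃ σ > (0 : ℝ), Summable fun n => Φ n ((∑' k, |a n k| * t k) / σ)) {ε : ℝ}
    (hε : OpANorm Φ a t < ε) :
    ∃ ρ > 0, ρ < ε ∧ Summable fun n => Φ n ((∑' k, |a n k| * t k) / ρ) := by
  obtain ⟨σ, hσ, hs⟩ := hL
  obtain ⟨ρ₀, hρ₀⟩ := hΦ.exists_summable_tsum_le_one
    (fun n => tsum_nonneg fun k => mul_nonneg (abs_nonneg (a n k)) (ht k)) hσ hs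
  obtain ⟨ρ, ⟨hρ, hρs, -⟩, hρε⟩ := (csInf_lt_iff ⟨0, fun _ h => h.1.le⟩ ⟨ρ₀, hρ₀⟩).1 hε
  exact ⟨ρ, hρ, hρε, hρs⟩

theorem summable_and_tsum_le_of_pair_le {f g : ℕ → ℝ} (hf : ∀ k, 0 ≤ f k) (hg : Summable g)
    (h : ∀ k, f (2 * k) + f (2 * k + 1) ≤ g k) : Summable f ∧ ∑' k, f k ≤ ∑' k, g k := by
  have heven : Summable fun k => f (2 * k) :=
    hg.of_nonneg_of_le (fun k => hf _) fun k => by linarith [h k, hf (2 * k + 1)]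
  have hodd : Summable fun k => f (2 * k + 1) :=
    hg.of_nonneg_of_le (fun k => hf _) fun k => by linarith [h k, hf (2 * k)]
  refine ⟨heven.even_add_odd hodd, ?_⟩
  rw [← tsum_even_add_odd heven hodd, ← heven.tsum_add hodd]
  exact (heven.add hodd).tsum_le_tsum h hg

theorem summable_and_tsum_le_mul_of_le {a t u : ℕ → ℝ} {c : ℝ} (ht : ∀ k, 0 ≤ t k)
    (hle : ∀ k, t k ≤ c * u k) (hu : Summable fun k => |a k| * u k) :
    (Summable fun k => |a k| * t k) ∧ ∑' k, |a k| * t k ≤ c * ∑' k, |a k| * u k := by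
  have hle' : ∀ k, |a k| * t k ≤ c * (|a k| * u k) := fun k => by
    linarith [mul_le_mul_of_nonneg_left (hle k) (abs_nonneg (a k))]
  have hs : Summable fun k => |a k| * t k :=
    (hu.mul_left c).of_nonneg_of_le (fun k => mul_nonneg (abs_nonneg _) (ht k)) hle'
  exact ⟨hs, tsum_mul_left (a := c) ▸ hs.tsum_le_tsum hle' (hu.mul_left c)⟩

theorem CondDiamond.summable_and_tsum_le {a : ℕ → ℕ → ℝ} {M : ℝ} (hD : CondDiamond a M)
    {t u v : ℕ → ℝ} (ht : ∀ k, 0 ≤ t k) (hanti : Antitone t) (huv : ∀ k, t (2 * k) ≤ u k + v k)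
    (n : ℕ) (hu : Summable fun k => |a n k| * u k) (hv : Summable fun k => |a n k| * v k) :
    (Summable fun k => |a n k| * t k) ∧
      ∑' k, |a n k| * t k ≤ M * ((∑' k, |a n k| * u k) + ∑' k, |a n k| * v k) := by
  have hpair : ∀ k, |a n (2 * k)| * t (2 * k) + |a n (2 * k + 1)| * t (2 * k + 1) ≤
      M * (|a n k| * u k + |a n k| * v k) := fun k => by
    have hMa : 0 ≤ M * |a n k| := (add_nonneg (abs_nonneg _) (abs_nonneg _)).trans (hD n k)
    calc |a n (2 * k)| * t (2 * k) + |a n (2 * k + 1)| * t (2 * k + 1)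
        ≤ (|a n (2 * k)| + |a n (2 * k + 1)|) * t (2 * k) := by
          nlinarith [hanti (Nat.le_succ (2 * k)), abs_nonneg (a n (2 * k + 1))]
      _ ≤ M * |a n k| * (u k + v k) :=
          mul_le_mul (hD n k) (huv k) (ht _) hMa
      _ = M * (|a n k| * u k + |a n k| * v k) := by ring
  obtain ⟨hs, hle⟩ := summable_and_tsum_le_of_pair_le (fun k => mul_nonneg (abs_nonneg _) (ht k))
    ((hu.add hv).mul_left M) hpair
  refine ⟨hs, hle.trans_eq ?_⟩
  rw [tsum_mul_left, hu.tsum_add hv]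

namespace SNumberSeq

variable (s : SNumberSeq) {E F : Type} [NormedAddCommGroup E] [NormedSpace ℝ E] [CompleteSpace E]
  [NormedAddCommGroup F] [NormedSpace ℝ F] [CompleteSpace F]

theorem s_smul_le (α : ℝ) (T : E →L[ℝ] F) (k : ℕ) :
    s.s E F (α • T) k ≤ |α| * s.s E F T k := by
  have h := s.ideal E F E F (α • ContinuousLinearMap.id ℝ F) T (ContinuousLinearMap.id ℝ E) k
  have hcomp : ((α • ContinuousLinearMap.id ℝ F).comp T).comp (ContinuousLinearMap.id ℝ E) =
      α • T := by
    ext x; simp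
  have hα : ‖α • ContinuousLinearMap.id ℝ F‖ ≤ |α| := by
    simpa using (α • ContinuousLinearMap.id ℝ F).opNorm_le_bound (abs_nonneg α)
      fun x => (norm_smul α x).le
  rw [hcomp] at h
  calc s.s E F (α • T) k
      ≤ ‖α • ContinuousLinearMap.id ℝ F‖ * s.s E F T k * ‖ContinuousLinearMap.id ℝ E‖ := h
    _ ≤ |α| * s.s E F T k * 1 :=
        mul_le_mul (mul_le_mul_of_nonneg_right hα (s.nonneg E F T k))
          ContinuousLinearMap.norm_id_le (norm_nonneg _)
          (mul_nonneg (abs_nonneg α) (s.nonneg E F T k))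
    _ = |α| * s.s E F T k := mul_one _

theorem s_neg (T : E →L[ℝ] F) (k : ℕ) : s.s E F (-T) k = s.s E F T k := by
  have h₁ := s.s_smul_le (-1) T k
  have h₂ := s.s_smul_le (-1) (-T) k
  simp only [neg_one_smul, neg_neg, abs_neg, abs_one, one_mul] at h₁ h₂
  exact le_antisymm h₁ h₂

theorem s_add_two_mul_le (S T : E →L[ℝ] F) (k : ℕ) :
    s.s E F (S + T) (2 * k) ≤ s.s E F S k + s.s E F T k :=
  two_mul k ▸ s.additive E F S T k k

theorem s_sub_two_mul_le (S T : E →L[ℝ] F) (k : ℕ) :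
    s.s E F (S - T) (2 * k) ≤ s.s E F S k + s.s E F T k := by
  simpa only [sub_eq_add_neg, s_neg] using s.s_add_two_mul_le S (-T) k

end SNumberSeq

section Rows

variable {Φ : ℕ → ℝ → ℝ} {a : ℕ → ℕ → ℝ} {M : ℝ} (s : SNumberSeq) {E F : Type}
  [NormedAddCommGroup E] [NormedSpace ℝ E] [CompleteSpace E]
  [NormedAddCommGroup F] [NormedSpace ℝ F] [CompleteSpace F]

theorem SNumberSeq.row_nonneg (T : E →L[ℝ] F) (n : ℕ) : 0 ≤ ∑' k, |a n k| * s.s E F T k :=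
  tsum_nonneg fun k => mul_nonneg (abs_nonneg _) (s.nonneg E F T k)

theorem CondDiamond.summable_and_row_le (hD : CondDiamond a M) {R S T : E →L[ℝ] F}
    (hRST : ∀ k, s.s E F R (2 * k) ≤ s.s E F S k + s.s E F T k)
    (hS : ∀ n, Summable fun k => |a n k| * s.s E F S k)
    (hT : ∀ n, Summable fun k => |a n k| * s.s E F T k) (n : ℕ) :
    (Summable fun k => |a n k| * s.s E F R k) ∧ ∑' k, |a n k| * s.s E F R k ≤
      M * ((∑' k, |a n k| * s.s E F S k) + ∑' k, |a n k| * s.s E F T k) :=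
  hD.summable_and_tsum_le (s.nonneg E F R) (s.antitone E F R) hRST n (hS n) (hT n)

theorem IsMusielakOrlicz.summable_row_div_of_s_two_mul_le (hΦ : IsMusielakOrlicz Φ)
    (hM : 0 < M) (hD : CondDiamond a M) {R S T : E →L[ℝ] F}
    (hRST : ∀ k, s.s E F R (2 * k) ≤ s.s E F S k + s.s E F T k)
    (hS : ∀ n, Summable fun k => |a n k| * s.s E F S k)
    (hT : ∀ n, Summable fun k => |a n k| * s.s E F T k) {τ σ : ℝ} (hτ : 0 < τ)
    (hσ : 2 * M * τ ≤ σ) (hSΦ : Summable fun n => Φ n ((∑' k, |a n k| * s.s E F S k) / τ))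
    (hTΦ : Summable fun n => Φ n ((∑' k, |a n k| * s.s E F T k) / τ)) :
    Summable fun n => Φ n ((∑' k, |a n k| * s.s E F R k) / σ) :=
  hΦ.summable_div_of_le_mul_add (s.row_nonneg R) (s.row_nonneg S) (s.row_nonneg T) hM
    (fun n => (hD.summable_and_row_le s hRST hS hT n).2) hτ hσ hSΦ hTΦ

end Rows

theorem opHPhiA_closed_subspace_general
    (Φ : ℕ → ℝ → ℝ) (hΦ : IsMusielakOrlicz Φ)
    (a : ℕ → ℕ → ℝ)
    (M : ℝ) (hM : 0 < M) (hD : CondDiamond a M)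
    (s : SNumberSeq)
    (E F : Type) [NormedAddCommGroup E] [NormedSpace ℝ E] [CompleteSpace E]
    [NormedAddCommGroup F] [NormedSpace ℝ F] [CompleteSpace F] :
    (∀ T : E →L[ℝ] F, OpMemH Φ a (s.s E F T) → OpMemL Φ a (s.s E F T)) ∧
    (∀ S T : E →L[ℝ] F, OpMemH Φ a (s.s E F S) → OpMemH Φ a (s.s E F T) →
      OpMemH Φ a (s.s E F (S + T))) ∧
    (∀ (α : ℝ) (T : E →L[ℝ] F), OpMemH Φ a (s.s E F T) →
      OpMemH Φ a (s.s E F (α • T))) ∧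
    (∀ T : E →L[ℝ] F, OpMemL Φ a (s.s E F T) →
      (∀ ε > (0 : ℝ), ∃ S : E →L[ℝ] F, OpMemH Φ a (s.s E F S) ∧
        OpANorm Φ a (s.s E F (T - S)) < ε) →
      OpMemH Φ a (s.s E F T)) := by
  have h2Mσ {σ : ℝ} : 2 * M * (σ / (2 * M)) ≤ σ := by field_simp; rfl
  refine ⟨fun T hT => ⟨hT.1, 1, one_pos, hT.2 1 one_pos⟩, ?_, ?_, ?_⟩
  · rintro S T ⟨hS, hSΦ⟩ ⟨hT, hTΦ⟩
    have hST := s.s_add_two_mul_le S T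
    refine ⟨fun n => (hD.summable_and_row_le s hST hS hT n).1, fun σ hσ => ?_⟩
    have hτ : 0 < σ / (2 * M) := by positivity
    exact hΦ.summable_row_div_of_s_two_mul_le s hM hD hST hS hT hτ h2Mσ (hSΦ _ hτ) (hTΦ _ hτ)
  · rintro α T ⟨hT, hTΦ⟩
    have hαT (n : ℕ) :=
      summable_and_tsum_le_mul_of_le (s.nonneg E F (α • T)) (s.s_smul_le α T) (hT n)
    refine ⟨fun n => (hαT n).1, fun σ hσ => ?_⟩
    have hα : 0 < |α| + 1 := by positivity
    refine hΦ.summable_div_of_le_mul (s.row_nonneg _) (s.row_nonneg T) (τ := σ / (|α| + 1))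
      (fun n => (hαT n).2) (by positivity) hσ ?_ (hTΦ _ (by positivity))
    rw [mul_div_assoc', div_le_iff₀ hα]
    nlinarith
  · rintro T ⟨hT, σ₀, hσ₀, hTΦ⟩ happrox
    refine ⟨hT, fun σ hσ => ?_⟩
    have hτ : 0 < σ / (2 * M) := by positivity
    obtain ⟨S, ⟨hS, hSΦ⟩, hTS_norm⟩ := happrox _ hτ
    have hTS := s.s_sub_two_mul_le T S
    have hTS_L := hΦ.summable_row_div_of_s_two_mul_le s hM hD hTS hT hS hσ₀ le_rfl hTΦ (hSΦ _ hσ₀)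
    obtain ⟨ρ, hρ, hρτ, hρΦ⟩ :=
      exists_summable_of_opANorm_lt hΦ (s.nonneg E F _) ⟨_, by positivity, hTS_L⟩ hTS_norm
    have hTS_τ : Summable fun n => Φ n ((∑' k, |a n k| * s.s E F (T - S) k) / (σ / (2 * M))) :=
      hΦ.summable_div_of_le_mul (s.row_nonneg _) (s.row_nonneg _) (c := 1) (by simp) hρ hτ
        (by linarith) hρΦ
    exact hΦ.summable_row_div_of_s_two_mul_le s hM hD (by simpa using s.s_add_two_mul_le S (T - S))
      hS (fun n => (hD.summable_and_row_le s hTS hT hS n).1) hτ h2Mσ (hSΦ _ hτ) hTS_τ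

/-- for `A ∈ 𝒜` satisfying condition (♦), `H_Φ^A(E,F)` is a
closed linear subspace of `(L_Φ^A(E,F), ‖·‖_Φ^A)`. -/
theorem opHPhiA_closed_subspace
    (Φ : ℕ → ℝ → ℝ) (hΦ : IsMusielakOrlicz Φ)
    (a : ℕ → ℕ → ℝ) (hA : MatrixClassA a)
    (M : ℝ) (hM : 0 < M) (hD : CondDiamond a M)
    (s : SNumberSeq)
    (E F : Type) [NormedAddCommGroup E] [NormedSpace ℝ E] [CompleteSpace E]
    [NormedAddCommGroup F] [NormedSpace ℝ F] [CompleteSpace F] :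
    (∀ T : E →L[ℝ] F, OpMemH Φ a (s.s E F T) → OpMemL Φ a (s.s E F T)) ∧
    (∀ S T : E →L[ℝ] F, OpMemH Φ a (s.s E F S) → OpMemH Φ a (s.s E F T) →
      OpMemH Φ a (s.s E F (S + T))) ∧
    (∀ (α : ℝ) (T : E →L[ℝ] F), OpMemH Φ a (s.s E F T) →
      OpMemH Φ a (s.s E F (α • T))) ∧
    (∀ T : E →L[ℝ] F, OpMemL Φ a (s.s E F T) →
      (∀ ε > (0 : ℝ), ∃ S : E →L[ℝ] F, OpMemH Φ a (s.s E F S) ∧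
        OpANorm Φ a (s.s E F (T - S)) < ε) →
      OpMemH Φ a (s.s E F T)) :=
  opHPhiA_closed_subspace_general Φ hΦ a M hM hD s E F
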